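/- Equip P = k[x₁,x₂,x₃] with the Poisson bracket {x₁,x₂} = 2x₁x₂, {x₂,x₃} = 2x₂x₃, {x₃,x₁} = 2x₁x₃. Then for an invertible matrix M = (a_{ij}): (i) φ_M is a graded Poisson automorphism of P if and only if M has one of the three forms [[a,0,0],[0,b,0],[0,0,c]], [[0,a,0],[0,0,b],[c,0,0]], [[0,0,a],[b,0,0],[0,c,0]] with a, b, c ∈ k \ {0} (i.e. M is a monomial matrix whose underlying permutation is the identity or a 3-cycle); (ii) φ_M is a Poisson reflection of P if and only if M is one of the diagonal matrices diag(ξ,1,1), diag(1,ξ,1), diag(1,1,ξ) for some root of unity ξ ≠ 1. -/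

import Mathlib

open MvPolynomial

/-- The bracket on `k[x₁,x₂,x₃]` determined by the values `p12 = {x₁,x₂}`, `p23 = {x₂,x₃}`,
`p31 = {x₃,x₁}` via `{f,g} = Σ_{i<j} (∂f/∂xᵢ·∂g/∂xⱼ − ∂f/∂xⱼ·∂g/∂xᵢ)·{xᵢ,xⱼ}`. -/
noncomputable def jacBracket {k : Type*} [Field k] (p12 p23 p31 : MvPolynomial (Fin 3) k)
    (f g : MvPolynomial (Fin 3) k) : MvPolynomial (Fin 3) k :=
  (pderiv 0 f * pderiv 1 g - pderiv 1 f * pderiv 0 g) * p12 +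
    (pderiv 1 f * pderiv 2 g - pderiv 2 f * pderiv 1 g) * p23 +
    (pderiv 2 f * pderiv 0 g - pderiv 0 f * pderiv 2 g) * p31

/-- The graded algebra endomorphism `φ_M` of `k[x₁,x₂,x₃]` with `φ_M(xᵢ) = Σⱼ M i j · xⱼ`. -/
noncomputable def phiM {k : Type*} [Field k] (M : Matrix (Fin 3) (Fin 3) k) :
    MvPolynomial (Fin 3) k →ₐ[k] MvPolynomial (Fin 3) k :=
  aeval fun i => ∑ j, C (M i j) * X j

/-- `φ_M` is a graded Poisson automorphism (for invertible `M`) iff it preserves the bracket. -/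
def IsPoissonAut {k : Type*} [Field k]
    (br : MvPolynomial (Fin 3) k → MvPolynomial (Fin 3) k → MvPolynomial (Fin 3) k)
    (M : Matrix (Fin 3) (Fin 3) k) : Prop :=
  ∀ f g, phiM M (br f g) = br (phiM M f) (phiM M g)

/-- `φ_M` is a Poisson reflection: a graded Poisson automorphism of finite order whose
eigenvalues are `1, 1, ξ` for some root of unity `ξ ≠ 1`. -/
def IsPoissonReflection {k : Type*} [Field k]
    (br : MvPolynomial (Fin 3) k → MvPolynomial (Fin 3) k → MvPolynomial (Fin 3) k)
    (M : Matrix (Fin 3) (Fin 3) k) : Prop :=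
  IsPoissonAut br M ∧ (∃ n, 0 < n ∧ M ^ n = 1) ∧
    ∃ ξ : k, ξ ≠ 1 ∧ (∃ m, 0 < m ∧ ξ ^ m = 1) ∧
      M.charpoly = (Polynomial.X - 1) ^ 2 * (Polynomial.X - Polynomial.C ξ)


/-!
The bracket is a biderivation, so `φ_M` is Poisson as soon as it preserves the brackets of
generators, and by antisymmetry it suffices to check `{xᵢ, xᵢ₊₁} = 2 xᵢ xᵢ₊₁` (indices mod 3).
For the linear forms `u = φ_M(xᵢ)`, `v = φ_M(xᵢ₊₁)`, comparing coefficients in `{u, v} = 2uv`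
shows that `M i l * M (i+1) l' = 0` unless `l' = l + 1`. Together with `det M ≠ 0` this forces
`M` to be supported on a single cyclic diagonal `{(i, i + s)}`, which gives the three forms.

For a reflection, the two cyclic forms are excluded because `1` is not a double root of their
characteristic polynomial `X³ - abc`, and for `diag(a, b, c)` the eigenvalue multiset `{a, b, c}` must
be `{1, 1, ξ}`.
-/

namespace jacBracket

variable {k : Type*} [Field k] (p12 p23 p31 : MvPolynomial (Fin 3) k)

theorem C_left (a : k) (g : MvPolynomial (Fin 3) k) : jacBracket p12 p23 p31 (C a) g = 0 := by
  simp [jacBracket]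

theorem C_right (f : MvPolynomial (Fin 3) k) (a : k) : jacBracket p12 p23 p31 f (C a) = 0 := by
  simp [jacBracket]

theorem add_left (f g h : MvPolynomial (Fin 3) k) : jacBracket p12 p23 p31 (f + g) h =
    jacBracket p12 p23 p31 f h + jacBracket p12 p23 p31 g h := by
  simp only [jacBracket, map_add]; ring

theorem add_right (f g h : MvPolynomial (Fin 3) k) : jacBracket p12 p23 p31 f (g + h) =
    jacBracket p12 p23 p31 f g + jacBracket p12 p23 p31 f h := by
  simp only [jacBracket, map_add]; ring

theorem mul_left (f g h : MvPolynomial (Fin 3) k) : jacBracket p12 p23 p31 (f * g) h =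
    f * jacBracket p12 p23 p31 g h + g * jacBracket p12 p23 p31 f h := by
  simp only [jacBracket, pderiv_mul]; ring

theorem mul_right (f g h : MvPolynomial (Fin 3) k) : jacBracket p12 p23 p31 f (g * h) =
    g * jacBracket p12 p23 p31 f h + h * jacBracket p12 p23 p31 f g := by
  simp only [jacBracket, pderiv_mul]; ring

theorem antisymm (f g : MvPolynomial (Fin 3) k) :
    jacBracket p12 p23 p31 f g = -jacBracket p12 p23 p31 g f := by
  simp only [jacBracket]; ring

theorem self (f : MvPolynomial (Fin 3) k) : jacBracket p12 p23 p31 f f = 0 := by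
  simp only [jacBracket]; ring

theorem X_X_add_one (i : Fin 3) :
    jacBracket p12 p23 p31 (X i) (X (i + 1)) = ![p12, p23, p31] i := by
  fin_cases i <;> simp [jacBracket]

end jacBracket

section Classification

variable {k : Type*} [Field k]

theorem isPoissonAut_of_map_X_X_add_one {p12 p23 p31 : MvPolynomial (Fin 3) k}
    {M : Matrix (Fin 3) (Fin 3) k}
    (h : ∀ i : Fin 3, phiM M (jacBracket p12 p23 p31 (X i) (X (i + 1))) =
      jacBracket p12 p23 p31 (phiM M (X i)) (phiM M (X (i + 1)))) :
    IsPoissonAut (jacBracket p12 p23 p31) M := by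
  have hX : ∀ i j : Fin 3, phiM M (jacBracket p12 p23 p31 (X i) (X j)) =
      jacBracket p12 p23 p31 (phiM M (X i)) (phiM M (X j)) := by
    intro i j
    obtain rfl | rfl | rfl : j = i ∨ j = i + 1 ∨ i = j + 1 := by
      fin_cases i <;> fin_cases j <;> decide
    · simp only [jacBracket.self, map_zero]
    · exact h i
    · rw [jacBracket.antisymm, map_neg, h, ← jacBracket.antisymm]
  have hX_right : ∀ (j : Fin 3) f, phiM M (jacBracket p12 p23 p31 f (X j)) =
      jacBracket p12 p23 p31 (phiM M f) (phiM M (X j)) := by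
    intro j f
    induction f using MvPolynomial.induction_on with
    | C a => simp [jacBracket.C_left]
    | add p q hp hq => simp only [jacBracket.add_left, map_add, hp, hq]
    | mul_X p i hp => simp only [jacBracket.mul_left, map_add, map_mul, hp, hX]
  intro f g
  induction g using MvPolynomial.induction_on with
  | C a => simp [jacBracket.C_right]
  | add p q hp hq => simp only [jacBracket.add_right, map_add, hp, hq]
  | mul_X p j hp => simp only [jacBracket.mul_right, map_add, map_mul, hp, hX_right]

theorem phiM_X (M : Matrix (Fin 3) (Fin 3) k) (i : Fin 3) :
    phiM M (X i) = C (M i 0) * X 0 + C (M i 1) * X 1 + C (M i 2) * X 2 := by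
  rw [phiM, aeval_X, Fin.sum_univ_three]

theorem pderiv_phiM_X (M : Matrix (Fin 3) (Fin 3) k) (i l : Fin 3) :
    pderiv l (phiM M (X i)) = C (M i l) := by
  fin_cases l <;> simp [phiM_X, pderiv_X]

theorem jacBracket_phiM_X (p12 p23 p31 : MvPolynomial (Fin 3) k) (M : Matrix (Fin 3) (Fin 3) k)
    (i j : Fin 3) :
    jacBracket p12 p23 p31 (phiM M (X i)) (phiM M (X j)) =
      (C (M i 0) * C (M j 1) - C (M i 1) * C (M j 0)) * p12 +
      (C (M i 1) * C (M j 2) - C (M i 2) * C (M j 1)) * p23 +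
      (C (M i 2) * C (M j 0) - C (M i 0) * C (M j 2)) * p31 := by
  simp only [jacBracket, pderiv_phiM_X]

def CyclicSupport (M : Matrix (Fin 3) (Fin 3) k) : Prop :=
  ∀ i l l', l' ≠ l + 1 → M i l * M (i + 1) l' = 0

def SupportedOnShift (M : Matrix (Fin 3) (Fin 3) k) (s : Fin 3) : Prop :=
  ∀ i l, l ≠ i + s → M i l = 0

local notation "𝔹" => jacBracket (2 * X 0 * X 1) (2 * X 1 * X 2) (2 * X 0 * X 2)

theorem bracket_X_X_add_one (i : Fin 3) :
    𝔹 (X i) (X (i + 1)) = (2 * X i * X (i + 1) : MvPolynomial (Fin 3) k) := by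
  rw [jacBracket.X_X_add_one]
  fin_cases i <;> simp
  ring

-- For `u = ∑ aₗxₗ`, `v = ∑ bₗxₗ`:
-- `2uv - {u, v} = 2 ∑ aₗbₗxₗ² + 4 (a₁b₀ x₀x₁ + a₂b₁ x₁x₂ + a₀b₂ x₀x₂)`.
theorem two_mul_phiM_X_eq_bracket_iff [CharZero k] (M : Matrix (Fin 3) (Fin 3) k) (i j : Fin 3) :
    2 * phiM M (X i) * phiM M (X j) = 𝔹 (phiM M (X i)) (phiM M (X j)) ↔
      ∀ l l', l' ≠ l + 1 → M i l * M j l' = 0 := by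
  rw [jacBracket_phiM_X, phiM_X, phiM_X]
  constructor
  · intro h
    have e : ∀ v0 v1 v2 : k, _ := fun v0 v1 v2 => congrArg (eval ![v0, v1, v2]) h
    simp only [map_mul, map_add, map_sub, map_ofNat, eval_C, eval_X, Matrix.cons_val_zero,
      Matrix.cons_val_one, Matrix.cons_val_two, Matrix.head_cons, Matrix.tail_cons] at e
    have h00 : M i 0 * M j 0 = 0 := by linear_combination e 1 0 0 / 2
    have h11 : M i 1 * M j 1 = 0 := by linear_combination e 0 1 0 / 2
    have h22 : M i 2 * M j 2 = 0 := by linear_combination e 0 0 1 / 2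
    have h10 : M i 1 * M j 0 = 0 := by linear_combination (e 1 1 0 - e 1 0 0 - e 0 1 0) / 4
    have h21 : M i 2 * M j 1 = 0 := by linear_combination (e 0 1 1 - e 0 1 0 - e 0 0 1) / 4
    have h02 : M i 0 * M j 2 = 0 := by linear_combination (e 1 0 1 - e 1 0 0 - e 0 0 1) / 4
    intro l l' hl
    fin_cases l <;> fin_cases l' <;> first | exact absurd rfl hl | assumption
  · intro h
    have hC : ∀ l l', l' ≠ l + 1 → (C (M i l) * C (M j l') : MvPolynomial (Fin 3) k) = 0 :=
      fun l l' hl => by rw [← C_mul, h l l' hl, C_0]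
    linear_combination (2 * X 0 ^ 2) * hC 0 0 (by decide) + (2 * X 1 ^ 2) * hC 1 1 (by decide) +
      (2 * X 2 ^ 2) * hC 2 2 (by decide) + (4 * X 0 * X 1) * hC 1 0 (by decide) +
      (4 * X 1 * X 2) * hC 2 1 (by decide) + (4 * X 0 * X 2) * hC 0 2 (by decide)

theorem isPoissonAut_iff_cyclicSupport [CharZero k] (M : Matrix (Fin 3) (Fin 3) k) :
    IsPoissonAut 𝔹 M ↔ CyclicSupport M := by
  have key : ∀ i, phiM M (𝔹 (X i) (X (i + 1))) = 𝔹 (phiM M (X i)) (phiM M (X (i + 1))) ↔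
      ∀ l l', l' ≠ l + 1 → M i l * M (i + 1) l' = 0 := fun i => by
    rw [bracket_X_X_add_one, map_mul, map_mul, map_ofNat, two_mul_phiM_X_eq_bracket_iff]
  exact ⟨fun h i => (key i).1 (h _ _),
    fun h => isPoissonAut_of_map_X_X_add_one fun i => (key i).2 (h i)⟩

theorem SupportedOnShift.cyclicSupport {M : Matrix (Fin 3) (Fin 3) k} {s : Fin 3}
    (hs : SupportedOnShift M s) : CyclicSupport M := by
  intro i l l' hl
  by_contra hne
  obtain ⟨hil, hil'⟩ := mul_ne_zero_iff.1 hne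
  have hl_eq : l = i + s := not_imp_comm.1 (hs i l) hil
  have hl'_eq : l' = i + 1 + s := not_imp_comm.1 (hs (i + 1) l') hil'
  exact hl (by rw [hl_eq, hl'_eq]; abel)

theorem CyclicSupport.exists_supportedOnShift {M : Matrix (Fin 3) (Fin 3) k} (hdet : M.det ≠ 0)
    (h : CyclicSupport M) : ∃ s, SupportedOnShift M s := by
  have row_ne_zero : ∀ i, ∃ l, M i l ≠ 0 := fun i => by
    by_contra! hi
    exact hdet (Matrix.det_eq_zero_of_row_eq_zero i hi)
  choose σ hσ using row_ne_zero
  have supp : ∀ i l, l ≠ σ i + 1 → M (i + 1) l = 0 := fun i l hl =>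
    (mul_eq_zero.1 (h i (σ i) l hl)).resolve_left (hσ i)
  have step : ∀ i, σ (i + 1) = σ i + 1 := fun i => by
    by_contra hne
    exact hσ (i + 1) (supp i _ hne)
  have hσ_eq : ∀ i, σ i = i + σ 0 := by
    intro i
    obtain rfl | rfl | rfl : i = 0 ∨ i = 0 + 1 ∨ i = 0 + 1 + 1 := by fin_cases i <;> decide
    · exact (zero_add _).symm
    · rw [step]; abel
    · rw [step, step]; abel
  refine ⟨σ 0, fun i l hl => ?_⟩
  obtain ⟨j, rfl⟩ : ∃ j, i = j + 1 := ⟨i - 1, by abel⟩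
  exact supp j l (by rwa [← step, hσ_eq])

theorem exists_supportedOnShift_iff {M : Matrix (Fin 3) (Fin 3) k} (hdet : M.det ≠ 0) :
    (∃ s, SupportedOnShift M s) ↔
      ∃ a b c : k, a ≠ 0 ∧ b ≠ 0 ∧ c ≠ 0 ∧
        (M = !![a, 0, 0; 0, b, 0; 0, 0, c] ∨ M = !![0, a, 0; 0, 0, b; c, 0, 0] ∨
          M = !![0, 0, a; b, 0, 0; 0, c, 0]) := by
  constructor
  · rintro ⟨s, hs⟩
    have hne : ∀ i, M i (i + s) ≠ 0 := fun i hi => hdet <| Matrix.det_eq_zero_of_row_eq_zero i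
      fun l => by
        by_cases hl : l = i + s
        · rwa [hl]
        · exact hs i l hl
    refine ⟨_, _, _, hne 0, hne 1, hne 2, ?_⟩
    fin_cases s <;> [left; (right; left); (right; right)] <;> ext i l <;>
      fin_cases i <;> fin_cases l <;> first | rfl | exact hs _ _ (by decide)
  · rintro ⟨a, b, c, -, -, -, rfl | rfl | rfl⟩ <;> [use 0; use 1; use 2] <;>
      intro i l hl <;> fin_cases i <;> fin_cases l <;> first | rfl | exact absurd (by decide) hl

theorem isPoissonAut_iff_monomial [CharZero k] {M : Matrix (Fin 3) (Fin 3) k} (hdet : M.det ≠ 0) :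
    IsPoissonAut 𝔹 M ↔
      ∃ a b c : k, a ≠ 0 ∧ b ≠ 0 ∧ c ≠ 0 ∧
        (M = !![a, 0, 0; 0, b, 0; 0, 0, c] ∨ M = !![0, a, 0; 0, 0, b; c, 0, 0] ∨
          M = !![0, 0, a; b, 0, 0; 0, c, 0]) := by
  rw [isPoissonAut_iff_cyclicSupport, ← exists_supportedOnShift_iff hdet]
  exact ⟨fun h => h.exists_supportedOnShift hdet, fun ⟨_, hs⟩ => hs.cyclicSupport⟩

theorem charpoly_fin_three_diag (a b c : k) :
    (!![a, 0, 0; 0, b, 0; 0, 0, c]).charpoly =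
      (({a, b, c} : Multiset k).map fun x => Polynomial.X - Polynomial.C x).prod := by
  rw [← Matrix.diagonal_vec3, Matrix.charpoly_diagonal, Fin.prod_univ_three]
  simp [mul_assoc]

theorem charpoly_fin_three_diag_eq_iff {a b c ξ : k} :
    (!![a, 0, 0; 0, b, 0; 0, 0, c]).charpoly =
        (Polynomial.X - 1) ^ 2 * (Polynomial.X - Polynomial.C ξ) ↔
      ({a, b, c} : Multiset k) = {1, 1, ξ} := by
  have hrhs : (Polynomial.X - 1) ^ 2 * (Polynomial.X - Polynomial.C ξ) =
      (({1, 1, ξ} : Multiset k).map fun x => Polynomial.X - Polynomial.C x).prod := by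
    simp; ring
  rw [charpoly_fin_three_diag, hrhs]
  refine ⟨fun h => ?_, fun h => h ▸ rfl⟩
  simpa only [Polynomial.roots_multiset_prod_X_sub_C] using congrArg Polynomial.roots h

theorem exactly_one_eq_of_multiset_eq [CharZero k] {a b c t ξ : k} (hξ : ξ ≠ t)
    (h : ({a, b, c} : Multiset k) = {t, t, ξ}) :
    a = ξ ∧ b = t ∧ c = t ∨ a = t ∧ b = ξ ∧ c = t ∨ a = t ∧ b = t ∧ c = ξ := by
  have mem : ∀ x ∈ ({a, b, c} : Multiset k), x = t ∨ x = ξ := fun x hx => by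
    rw [h] at hx
    simpa using hx
  have hsum := congrArg Multiset.sum h
  simp only [Multiset.insert_eq_cons, Multiset.sum_cons, Multiset.sum_singleton] at hsum
  rcases mem a (by simp) with rfl | rfl <;> rcases mem b (by simp) with rfl | rfl <;>
    rcases mem c (by simp) with rfl | rfl <;>
    simp only [true_and, and_true, and_self, true_or, or_true]
  all_goals
    exfalso
    apply hξ
  -- here `hsum` says `(n - 1) • ξ = (n - 1) • t`, where `n ∈ {0, 2, 3}` counts the `ξ`s
  all_goals first | linear_combination hsum | linear_combination -hsum | linear_combination hsum / 2

theorem charpoly_cyclic {a b c : k} {M : Matrix (Fin 3) (Fin 3) k}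
    (hM : M = !![0, a, 0; 0, 0, b; c, 0, 0] ∨ M = !![0, 0, a; b, 0, 0; 0, c, 0]) :
    M.charpoly = Polynomial.X ^ 3 - Polynomial.C (a * b * c) := by
  rcases hM with rfl | rfl <;> rw [Matrix.charpoly, Matrix.det_fin_three] <;>
    simp [Matrix.charmatrix_apply_eq, Matrix.charmatrix_apply_ne] <;> ring

theorem X_pow_three_sub_C_ne [CharZero k] (q ξ : k) :
    (Polynomial.X ^ 3 - Polynomial.C q : Polynomial k) ≠
      (Polynomial.X - 1) ^ 2 * (Polynomial.X - Polynomial.C ξ) := by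
  intro h
  simpa [Polynomial.derivative_mul, Polynomial.derivative_pow] using
    congrArg (fun p => (Polynomial.derivative p).eval 1) h

theorem supportedOnShift_diagonal (d : Fin 3 → k) : SupportedOnShift (Matrix.diagonal d) 0 :=
  fun _ _ hl => Matrix.diagonal_apply_ne _ (by simpa using hl.symm)

theorem isPoissonReflection_diag [CharZero k] {a b c ξ : k} {m : ℕ} (hm : 0 < m) (hξ1 : ξ ≠ 1)
    (hξm : ξ ^ m = 1) (habc : ({a, b, c} : Multiset k) = {1, 1, ξ}) :
    IsPoissonReflection 𝔹 !![a, 0, 0; 0, b, 0; 0, 0, c] := by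
  have hpow : ∀ x ∈ ({a, b, c} : Multiset k), x ^ m = 1 := fun x hx => by
    rw [habc] at hx
    rcases (by simpa using hx : x = 1 ∨ x = ξ) with rfl | rfl
    exacts [one_pow m, hξm]
  refine ⟨?_, ⟨m, hm, ?_⟩, ξ, hξ1, ⟨m, hm, hξm⟩, charpoly_fin_three_diag_eq_iff.2 habc⟩
  · rw [isPoissonAut_iff_cyclicSupport, ← Matrix.diagonal_vec3]
    exact (supportedOnShift_diagonal _).cyclicSupport
  · rw [← Matrix.diagonal_vec3, Matrix.diagonal_pow, ← Matrix.diagonal_one]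
    congr 1
    ext i
    fin_cases i <;> simp [hpow]

end Classification

theorem stmt_5_general {k : Type*} [Field k] [CharZero k]
    (M : Matrix (Fin 3) (Fin 3) k) (hM : IsUnit M.det) :
    (IsPoissonAut (jacBracket (2 * X 0 * X 1) (2 * X 1 * X 2) (2 * X 0 * X 2)) M ↔
      ∃ a b c : k, a ≠ 0 ∧ b ≠ 0 ∧ c ≠ 0 ∧
        (M = !![a, 0, 0; 0, b, 0; 0, 0, c] ∨ M = !![0, a, 0; 0, 0, b; c, 0, 0] ∨
          M = !![0, 0, a; b, 0, 0; 0, c, 0])) ∧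
    (IsPoissonReflection (jacBracket (2 * X 0 * X 1) (2 * X 1 * X 2) (2 * X 0 * X 2)) M ↔
      ∃ ξ : k, ξ ≠ 1 ∧ (∃ m, 0 < m ∧ ξ ^ m = 1) ∧
        (M = !![ξ, 0, 0; 0, 1, 0; 0, 0, 1] ∨ M = !![1, 0, 0; 0, ξ, 0; 0, 0, 1] ∨
          M = !![1, 0, 0; 0, 1, 0; 0, 0, ξ])) := by
  have aut_iff := isPoissonAut_iff_monomial hM.ne_zero
  refine ⟨aut_iff, ?_, ?_⟩
  · rintro ⟨hAut, -, ξ, hξ1, hroot, hcp⟩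
    obtain ⟨a, b, c, -, -, -, rfl | hcyc⟩ := aut_iff.1 hAut
    · refine ⟨ξ, hξ1, hroot, ?_⟩
      rcases exactly_one_eq_of_multiset_eq hξ1 (charpoly_fin_three_diag_eq_iff.1 hcp) with
        ⟨rfl, rfl, rfl⟩ | ⟨rfl, rfl, rfl⟩ | ⟨rfl, rfl, rfl⟩
      exacts [.inl rfl, .inr (.inl rfl), .inr (.inr rfl)]
    · exact absurd (charpoly_cyclic hcyc ▸ hcp) (X_pow_three_sub_C_ne _ _)
  · rintro ⟨ξ, hξ1, ⟨m, hm, hξm⟩, rfl | rfl | rfl⟩ <;>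
      refine isPoissonReflection_diag hm hξ1 hξm ?_ <;>
      simp only [Multiset.insert_eq_cons, ← Multiset.singleton_add] <;> abel

/-- Case `{x₁,x₂} = 2x₁x₂`, `{x₂,x₃} = 2x₂x₃`, `{x₃,x₁} = 2x₁x₃`. -/
theorem stmt_5 {k : Type*} [Field k] [IsAlgClosed k] [CharZero k]
    (M : Matrix (Fin 3) (Fin 3) k) (hM : IsUnit M.det) :
    (IsPoissonAut (jacBracket (2 * X 0 * X 1) (2 * X 1 * X 2) (2 * X 0 * X 2)) M ↔
      ∃ a b c : k, a ≠ 0 ∧ b ≠ 0 ∧ c ≠ 0 ∧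
        (M = !![a, 0, 0; 0, b, 0; 0, 0, c] ∨ M = !![0, a, 0; 0, 0, b; c, 0, 0] ∨
          M = !![0, 0, a; b, 0, 0; 0, c, 0])) ∧
    (IsPoissonReflection (jacBracket (2 * X 0 * X 1) (2 * X 1 * X 2) (2 * X 0 * X 2)) M ↔
      ∃ ξ : k, ξ ≠ 1 ∧ (∃ m, 0 < m ∧ ξ ^ m = 1) ∧
        (M = !![ξ, 0, 0; 0, 1, 0; 0, 0, 1] ∨ M = !![1, 0, 0; 0, ξ, 0; 0, 0, 1] ∨
          M = !![1, 0, 0; 0, 1, 0; 0, 0, ξ])) :=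
  stmt_5_general M hM
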